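/- arXiv:2010.11064 — 6 statements merged into one kernel-verified Lean document; each statement's English description precedes it below -/
import Mathlib

section
/- Let P_{i-1} be the set of Pareto-optimal solutions among S_{i-1} = {x ∈ {0,1}^n : x_j = 0 for all j ≥ i} and P_i the set of Pareto-optimal solutions among S_i = {x ∈ {0,1}^n : x_j = 0 for all j ≥ i+1}. Then P_i ⊆ P_{i-1} ∪ P_{i-1}^{+i}, where P_{i-1}^{+i} is obtained from P_{i-1} by setting coordinate i to 1 in each solution. -/
def dotB {n : ℕ} (c : Fin n → ℝ) (x : Fin n → Bool) : ℝ :=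
  ∑ i, c i * (if x i then 1 else 0)

def dominates {n : ℕ} (p w : Fin n → ℝ) (y x : Fin n → Bool) : Prop :=
  dotB p x ≤ dotB p y ∧ dotB w y ≤ dotB w x ∧ (dotB p x < dotB p y ∨ dotB w y < dotB w x)

/-- The set of Pareto-optimal solutions within a set `S` of solutions. -/
def paretoSet {n : ℕ} (p w : Fin n → ℝ) (S : Set (Fin n → Bool)) : Set (Fin n → Bool) :=
  {x | x ∈ S ∧ ∀ y ∈ S, ¬ dominates p w y x}

/-!
If `x ∈ P_i` has `x_i = 0`, it lies in `S_{i-1} ⊆ S_i` and stays Pareto-optimal there. If `x_i = 1`,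
then `x = y^{+i}` with `y ∈ S_{i-1}`, and a `y'` dominating `y` in `S_{i-1}` would give `y'^{+i}`
dominating `x` in `S_i`: adding item `i` shifts every profit by `p_i` and every weight by `w_i`.
-/

lemma forall_le_imp_iff {α : Type*} [PartialOrder α] {P : α → Prop} {a : α} :
    (∀ b, a ≤ b → P b) ↔ P a ∧ ∀ b, a < b → P b :=
  ⟨fun h => ⟨h a le_rfl, fun b hb => h b hb.le⟩,
    fun ⟨ha, h⟩ b hab => hab.eq_or_lt.elim (· ▸ ha) (h b)⟩

section

variable {n : ℕ}

lemma dotB_update_true (c : Fin n → ℝ) {x : Fin n → Bool} {i : Fin n} (hxi : x i = false) :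
    dotB c (Function.update x i true) = dotB c x + c i := by
  unfold dotB
  rw [← Finset.add_sum_erase _ _ (Finset.mem_univ i),
    ← Finset.add_sum_erase _ _ (Finset.mem_univ i), add_right_comm _ _ (c i)]
  congr 1
  · simp [hxi]
  · refine Finset.sum_congr rfl fun j hj => ?_
    rw [Function.update_of_ne (Finset.ne_of_mem_erase hj)]

lemma dominates_update_true {p w : Fin n → ℝ} {x y : Fin n → Bool} {i : Fin n}
    (hxi : x i = false) (hyi : y i = false) (h : dominates p w y x) :
    dominates p w (Function.update y i true) (Function.update x i true) := by
  simp only [dominates, dotB_update_true _ hxi, dotB_update_true _ hyi, add_le_add_iff_right,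
    add_lt_add_iff_right]
  exact h

lemma paretoSet_subset {p w : Fin n → ℝ} {S : Set (Fin n → Bool)} : paretoSet p w S ⊆ S :=
  fun _ hx => hx.1

lemma mem_paretoSet_of_subset {p w : Fin n → ℝ} {S T : Set (Fin n → Bool)} {x : Fin n → Bool}
    (hTS : T ⊆ S) (hxT : x ∈ T) (hx : x ∈ paretoSet p w S) : x ∈ paretoSet p w T :=
  ⟨hxT, fun y hy => hx.2 y (hTS hy)⟩

lemma mem_paretoSet_of_update_true {p w : Fin n → ℝ} {S T : Set (Fin n → Bool)}
    {x : Fin n → Bool} {i : Fin n} (hS : ∀ y ∈ S, y i = false ∧ Function.update y i true ∈ T)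
    (hx : x ∈ S) (hxT : Function.update x i true ∈ paretoSet p w T) : x ∈ paretoSet p w S :=
  ⟨hx, fun y hy hyx =>
    hxT.2 _ (hS y hy).2 (dominates_update_true (hS x hx).1 (hS y hy).1 hyx)⟩

end

theorem pareto_step_general {n : ℕ} (p w : Fin n → ℝ)
    (i : Fin n) :
    paretoSet p w {x | ∀ j, i < j → x j = false} ⊆
      paretoSet p w {x | ∀ j, i ≤ j → x j = false} ∪
        (fun x => Function.update x i true) '' paretoSet p w {x | ∀ j, i ≤ j → x j = false} := by
  intro x hx
  have hxS : ∀ j, i < j → x j = false := paretoSet_subset hx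
  cases hxi : x i
  · exact .inl (mem_paretoSet_of_subset (Set.ofPred_subset_ofPred.2 fun _ hy j hj => hy j hj.le)
      (forall_le_imp_iff.2 ⟨hxi, hxS⟩) hx)
  · have hx' : Function.update (Function.update x i false) i true = x := by
      rw [Function.update_idem, ← hxi, Function.update_eq_self]
    have hS : ∀ y ∈ {y : Fin n → Bool | ∀ j, i ≤ j → y j = false},
        y i = false ∧ Function.update y i true ∈ {x : Fin n → Bool | ∀ j, i < j → x j = false} :=
      fun y hy => ⟨hy i le_rfl, fun j hj => (Function.update_of_ne hj.ne' ..).trans (hy j hj.le)⟩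
    refine .inr ⟨_, mem_paretoSet_of_update_true hS ?_ (hx'.symm ▸ hx), hx'⟩
    refine forall_le_imp_iff.2 ⟨Function.update_self .., fun j hj => ?_⟩
    exact (Function.update_of_ne hj.ne' ..).trans (hxS j hj)

/-- `P_i ⊆ P_{i-1} ∪ P_{i-1}^{+i}` where `S_{i-1}` consists of the solutions using only
items `< i` and `S_i` of those using only items `≤ i`. -/
theorem pareto_step {n : ℕ} (p w : Fin n → ℝ) (hp : ∀ i, 0 ≤ p i) (hw : ∀ i, 0 ≤ w i)
    (i : Fin n) :
    paretoSet p w {x | ∀ j, i < j → x j = false} ⊆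
      paretoSet p w {x | ∀ j, i ≤ j → x j = false} ∪
        (fun x => Function.update x i true) '' paretoSet p w {x | ∀ j, i ≤ j → x j = false} :=
  pareto_step_general p w i
end

section
/- Let w_1,...,w_n be independent real random variables, each with density bounded by φ. For every k ∈ ℕ, the probability that there exist two distinct solutions x, y ∈ {0,1}^n with |w·x − w·y| ≤ n/k is at most 2^{2n+1}·n·φ/k. -/
/-!
Take the union bound over the at most `4 ^ n` pairs `x ≠ y`. For a fixed pair pick a coordinate
`i` with `x i ≠ y i`; up to a sign, `w·x - w·y` is `w_i + T` with `T` a combination of the other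
weights, hence independent of `w_i`. Conditioning on `T` (Fubini for the product law of
`(w_i, T)`), `w_i` must land in an interval of length `2 n / k`, which has probability at most
`2 n φ / k`.
-/

open MeasureTheory
open scoped ProbabilityTheory

open ProbabilityTheory
open scoped ENNReal

lemma dotB_sub_dotB {n : ℕ} (c : Fin n → ℝ) (x y : Fin n → Bool) :
    dotB c x - dotB c y
      = ∑ j, c j * ((if x j then 1 else 0) - (if y j then 1 else 0)) := by
  simp only [dotB, ← Finset.sum_sub_distrib, mul_sub]

lemma exists_abs_dotB_sub_eq_abs_sum {n : ℕ} {x y : Fin n → Bool} (hxy : x ≠ y) :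
    ∃ i, ∃ a : Fin n → ℝ, a i = 1 ∧
      ∀ c, |dotB c x - dotB c y| = |∑ j, a j * c j| := by
  obtain ⟨i, hi⟩ := Function.ne_iff.mp hxy
  let e : Fin n → ℝ := fun j => (if x j then 1 else 0) - (if y j then 1 else 0)
  have he : e i = 1 ∨ e i = -1 := by
    cases hx : x i <;> cases hy : y i <;> simp_all [e]
  -- scaling by `e i = ±1` normalises the coefficient of `c i` and keeps the absolute value
  refine ⟨i, fun j => e i * e j, by rcases he with h | h <;> simp [h], fun c => ?_⟩
  simp only [dotB_sub_dotB, mul_assoc, ← Finset.mul_sum, abs_mul]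
  rcases he with h | h <;> simp [h, e, mul_comm]

section DensityBounds

variable {Ω : Type*} {mΩ : MeasurableSpace Ω} {P : Measure Ω}

lemma map_apply_le_mul_of_pdf_le {E : Type*} [MeasurableSpace E] {μ : Measure E} (X : Ω → E)
    [HasPDF X P μ] {c : ℝ≥0∞} (hc : ∀ᵐ x ∂μ, pdf X P μ x ≤ c) {s : Set E}
    (hs : MeasurableSet s) :
    P.map X s ≤ c * μ s := by
  rw [map_eq_setLIntegral_pdf X P μ hs, ← setLIntegral_const]
  exact lintegral_mono_ae (ae_restrict_of_ae hc)

lemma measure_abs_add_le_le_of_indepFun [IsProbabilityMeasure P] {X T : Ω → ℝ} [HasPDF X P]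
    (hT : AEMeasurable T P) (hXT : IndepFun X T P) {c : ℝ≥0∞}
    (hc : ∀ᵐ x, pdf X P volume x ≤ c) (r : ℝ) :
    P {ω | |X ω + T ω| ≤ r} ≤ c * ENNReal.ofReal (2 * r) := by
  have hX : AEMeasurable X P := HasPDF.aemeasurable X P volume
  let s : Set (ℝ × ℝ) := {p | |p.1 + p.2| ≤ r}
  have hs : MeasurableSet s := measurableSet_le (by fun_prop) measurable_const
  have hslice (t : ℝ) : (fun x => (x, t)) ⁻¹' s = Set.Icc (-t - r) (-t + r) := by
    ext x
    simp only [s, Set.mem_preimage, Set.mem_ofPred_eq, Set.mem_Icc, abs_le]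
    constructor <;> intro h <;> constructor <;> linarith [h.1, h.2]
  have : IsProbabilityMeasure (P.map T) := Measure.isProbabilityMeasure_map hT
  calc P {ω | |X ω + T ω| ≤ r} = (P.map X).prod (P.map T) s := by
        rw [← hXT.map_prod_eq_prod_map_map hX hT,
          Measure.map_apply_of_aemeasurable (hX.prodMk hT) hs]
        rfl
    _ = ∫⁻ t, P.map X ((fun x => (x, t)) ⁻¹' s) ∂P.map T := Measure.prod_apply_symm hs
    _ ≤ ∫⁻ _, c * ENNReal.ofReal (2 * r) ∂P.map T := lintegral_mono fun t => by
        rw [hslice, ← show volume (Set.Icc (-t - r) (-t + r)) = ENNReal.ofReal (2 * r) by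
          rw [Real.volume_Icc]; ring_nf]
        exact map_apply_le_mul_of_pdf_le X hc measurableSet_Icc
    _ = c * ENNReal.ofReal (2 * r) := by simp

lemma measure_abs_dotB_sub_le_le {n : ℕ} {W : Fin n → Ω → ℝ} (hindep : iIndepFun W P)
    (hpdf : ∀ i, HasPDF (W i) P) {c : ℝ≥0∞} (hc : ∀ i, ∀ᵐ x, pdf (W i) P volume x ≤ c)
    {x y : Fin n → Bool} (hxy : x ≠ y) (r : ℝ) :
    P {ω | |dotB (fun i => W i ω) x - dotB (fun i => W i ω) y| ≤ r}
      ≤ c * ENNReal.ofReal (2 * r) := by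
  have := hindep.isProbabilityMeasure
  obtain ⟨i, a, hai, hdot⟩ := exists_abs_dotB_sub_eq_abs_sum hxy
  let V : Fin n → Ω → ℝ := fun j ω => a j * W j ω
  have hVi : V i = W i := funext fun ω => by simp [V, hai]
  have hV : iIndepFun V P := hindep.comp (fun j => (a j * ·)) fun j => measurable_const_mul _
  have hVm (j : Fin n) : AEMeasurable (V j) P :=
    (HasPDF.aemeasurable (W j) P volume).const_mul _
  have hindepi : IndepFun (W i) (∑ j ∈ Finset.univ.erase i, V j) P :=
    hVi ▸ (hV.indepFun_finsetSum_of_notMem₀ hVm (Finset.notMem_erase i _)).symm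
  have hsplit (ω : Ω) :
      ∑ j, a j * W j ω = W i ω + (∑ j ∈ Finset.univ.erase i, V j) ω := by
    rw [← Finset.add_sum_erase _ _ (Finset.mem_univ i), Finset.sum_apply, hai, one_mul]
  simp only [hdot, hsplit]
  exact measure_abs_add_le_le_of_indepFun (Finset.aemeasurable_sum _ fun j _ => hVm j)
    hindepi (hc i) r

end DensityBounds

theorem prob_close_weights_general {Ω : Type*} [MeasureSpace Ω] {n : ℕ}
    (W : Fin n → Ω → ℝ) (φ : ℝ)
    (hindep : ProbabilityTheory.iIndepFun W ℙ)
    (hpdf : ∀ i, HasPDF (W i) ℙ)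
    (hbound : ∀ i, ∀ᵐ x : ℝ, pdf (W i) ℙ volume x ≤ ENNReal.ofReal φ)
    (k : ℕ) :
    ℙ {ω | ∃ x y : Fin n → Bool, x ≠ y ∧
        |dotB (fun i => W i ω) x - dotB (fun i => W i ω) y| ≤ (n : ℝ) / k}
      ≤ ENNReal.ofReal (2 ^ (2 * n + 1) * n * φ / k) := by
  set r : ℝ := (n : ℝ) / k
  let close (p : (Fin n → Bool) × (Fin n → Bool)) : Set Ω :=
    {ω | p.1 ≠ p.2 ∧ |dotB (fun i => W i ω) p.1 - dotB (fun i => W i ω) p.2| ≤ r}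
  have hclose (p) : ℙ (close p) ≤ ENNReal.ofReal φ * ENNReal.ofReal (2 * r) := by
    by_cases hp : p.1 = p.2
    · simp [close, hp]
    · exact (measure_mono fun ω hω => hω.2).trans
        (measure_abs_dotB_sub_le_le hindep hpdf hbound hp r)
  calc ℙ {ω | ∃ x y : Fin n → Bool, x ≠ y ∧
        |dotB (fun i => W i ω) x - dotB (fun i => W i ω) y| ≤ r}
      = ℙ (⋃ p, close p) := by congr 1; ext ω; simp [close]
    _ ≤ ∑ p, ℙ (close p) := measure_iUnion_fintype_le _ _
    _ ≤ ∑ _p : (Fin n → Bool) × (Fin n → Bool),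
          ENNReal.ofReal φ * ENNReal.ofReal (2 * r) :=
        Finset.sum_le_sum fun p _ => hclose p
    _ = ENNReal.ofReal (2 ^ (2 * n + 1) * n * φ / k) := by
        rw [Finset.sum_const, nsmul_eq_mul, ← ENNReal.ofReal_mul' (by positivity),
          ← ENNReal.ofReal_natCast, ← ENNReal.ofReal_mul (by positivity)]
        congr 1
        simp only [Finset.card_univ, Fintype.card_prod, Fintype.card_fun, Fintype.card_bool,
          Fintype.card_fin, r]
        push_cast
        ring

/-- For independent weights with densities bounded by `φ`, the probability that two
distinct solutions have weights within `n/k` of each other is at most `2^{2n+1}·n·φ/k`. -/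
theorem prob_close_weights {Ω : Type*} [MeasureSpace Ω]
    [IsProbabilityMeasure (ℙ : Measure Ω)] {n : ℕ}
    (W : Fin n → Ω → ℝ) (φ : ℝ) (hφ : 0 < φ)
    (hindep : ProbabilityTheory.iIndepFun W ℙ)
    (hpdf : ∀ i, HasPDF (W i) ℙ)
    (hbound : ∀ i, ∀ᵐ x : ℝ, pdf (W i) ℙ volume x ≤ ENNReal.ofReal φ)
    (k : ℕ) (hk : 0 < k) :
    ℙ {ω | ∃ x y : Fin n → Bool, x ≠ y ∧
        |dotB (fun i => W i ω) x - dotB (fun i => W i ω) y| ≤ (n : ℝ) / k}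
      ≤ ENNReal.ofReal (2 ^ (2 * n + 1) * n * φ / k) :=
  prob_close_weights_general W φ hindep hpdf hbound k
end

section
/- Fix profits p_1,...,p_n ∈ ℝ≥0 and let w_1,...,w_n be independent nonnegative random variables each with density bounded by φ. For every t ≥ 0 and ε > 0, the probability that there exists a Pareto-optimal solution x ∈ {0,1}^n with w·x ∈ (t, t+ε] is at most n·φ·ε. -/
open MeasureTheory
open scoped ProbabilityTheory

def pareto {n : ℕ} (p w : Fin n → ℝ) (x : Fin n → Bool) : Prop :=
  ∀ y : Fin n → Bool, ¬ dominates p w y x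

/-!
For an item `i`, the weights of the other items determine a threshold `g_i`: the least weight,
not counting item `i`, of a solution that contains `i` and is more profitable than every
solution of weight at most `t` avoiding `i`. If a Pareto-optimal `x` has weight in `(t, t + ε]`,
then `x` is more profitable than the most profitable solution `y` of weight at most `t`, so `x`
contains an item `i` missing from `y`, and then `w_i + g_i` lies in `(t, t + ε]`. Since `w_i` is
independent of `g_i` and has density at most `φ`, this has probability at most `φ ε`; a union
bound over the `n` items finishes the proof.
-/

open Finset Function ProbabilityTheory

theorem Finset.measurable_inf' {α δ ι : Type*} [MeasurableSpace α] [SemilatticeInf α]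
    [MeasurableInf₂ α] [MeasurableSpace δ] {s : Finset ι} (hs : s.Nonempty)
    {f : ι → δ → α} (hf : ∀ k ∈ s, Measurable (f k)) : Measurable (s.inf' hs f) :=
  Finset.inf'_induction hs _ (fun _f hf _g hg => hf.inf hg) fun k hk => hf k hk

section Probability

variable {Ω : Type*} [MeasurableSpace Ω] {μ : Measure Ω} {φ ε : ℝ}

theorem map_Ioc_le_of_pdf_le {X : Ω → ℝ} [HasPDF X μ]
    (hbound : ∀ᵐ x : ℝ, pdf X μ volume x ≤ ENNReal.ofReal φ) (a : ℝ) (hε : 0 ≤ ε) :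
    μ.map X (Set.Ioc a (a + ε)) ≤ ENNReal.ofReal (φ * ε) := by
  rw [map_eq_withDensity_pdf X μ volume, withDensity_apply _ measurableSet_Ioc]
  calc ∫⁻ x in Set.Ioc a (a + ε), pdf X μ volume x
      ≤ ∫⁻ _ in Set.Ioc a (a + ε), ENNReal.ofReal φ := lintegral_mono_ae (ae_restrict_of_ae hbound)
    _ = ENNReal.ofReal (φ * ε) := by
      rw [setLIntegral_const, Real.volume_Ioc, ENNReal.ofReal_mul' hε, add_sub_cancel_left]

theorem measure_add_mem_Ioc_le [IsProbabilityMeasure μ] {X C : Ω → ℝ} [HasPDF X μ]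
    (hC : AEMeasurable C μ) (hXC : X ⟂ᵢ[μ] C)
    (hbound : ∀ᵐ x : ℝ, pdf X μ volume x ≤ ENNReal.ofReal φ) (t : ℝ) (hε : 0 ≤ ε) :
    μ {ω | X ω + C ω ∈ Set.Ioc t (t + ε)} ≤ ENNReal.ofReal (φ * ε) := by
  have hX : AEMeasurable X μ := HasPDF.aemeasurable X μ volume
  set s : Set (ℝ × ℝ) := {q | q.1 + q.2 ∈ Set.Ioc t (t + ε)}
  have hs : MeasurableSet s := (measurable_fst.add measurable_snd) measurableSet_Ioc
  have hslice : ∀ c, (fun x => (x, c)) ⁻¹' s = Set.Ioc (t - c) (t - c + ε) := fun c => by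
    ext x; simp only [s, Set.mem_preimage, Set.mem_ofPred_eq, Set.mem_Ioc]; constructor <;>
      rintro ⟨h₁, h₂⟩ <;> constructor <;> linarith
  calc μ {ω | X ω + C ω ∈ Set.Ioc t (t + ε)} = μ.map (fun ω => (X ω, C ω)) s :=
        (Measure.map_apply_of_aemeasurable (hX.prodMk hC) hs).symm
    _ = ∫⁻ c, μ.map X ((fun x => (x, c)) ⁻¹' s) ∂μ.map C := by
      rw [(indepFun_iff_map_prod_eq_prod_map_map hX hC).1 hXC, Measure.prod_apply_symm hs]
    _ ≤ ∫⁻ _, ENNReal.ofReal (φ * ε) ∂μ.map C :=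
      lintegral_mono fun c => (hslice c).symm ▸ map_Ioc_le_of_pdf_le hbound _ hε
    _ = ENNReal.ofReal (φ * ε) := by
      simp [Measure.map_apply_of_aemeasurable hC MeasurableSet.univ]

theorem measure_add_comp_update_mem_Ioc_le {ι : Type*} [Fintype ι]
    [DecidableEq ι] {W : ι → Ω → ℝ} (hW : ∀ j, AEMeasurable (W j) μ) (hindep : iIndepFun W μ)
    (i : ι) [HasPDF (W i) μ] (hbound : ∀ᵐ x : ℝ, pdf (W i) μ volume x ≤ ENNReal.ofReal φ)
    {G : (ι → ℝ) → ℝ} (hG : Measurable G) (t : ℝ) (hε : 0 ≤ ε) :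
    μ {ω | W i ω + G (update (fun j => W j ω) i 0) ∈ Set.Ioc t (t + ε)}
      ≤ ENNReal.ofReal (φ * ε) := by
  have := hindep.isProbabilityMeasure
  set T : Finset ι := {i}ᶜ
  set extend : (T → ℝ) → ι → ℝ := fun v j => if h : j ∈ T then v ⟨j, h⟩ else 0
  have hextend : Measurable extend := measurable_pi_lambda _ fun j => by
    by_cases h : j ∈ T
    · simpa [extend, h] using measurable_pi_apply _
    · simp only [extend, h, dite_false, measurable_const]
  have hextend_eq : ∀ ω, extend (fun j => W j ω) = update (fun j => W j ω) i 0 := fun ω => by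
    funext j; by_cases h : j = i <;> simp [extend, T, h]
  have hindep' : W i ⟂ᵢ[μ] fun ω => G (extend fun j => W j ω) :=
    (hindep.indepFun_finset₀ {i} T (by simp [T]) hW).comp
      (measurable_pi_apply (⟨i, mem_singleton_self i⟩ : ({i} : Finset ι))) (hG.comp hextend)
  have hC : AEMeasurable (fun ω => G (extend fun j => W j ω)) μ :=
    (hG.comp hextend).comp_aemeasurable (aemeasurable_pi_lambda _ fun j => hW j)
  simp only [← hextend_eq]
  exact measure_add_mem_Ioc_le hC hindep' hbound t hε

end Probability

section DotB

variable {n : ℕ}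

theorem dotB_nonneg {c : Fin n → ℝ} (hc : ∀ j, 0 ≤ c j) (x : Fin n → Bool) : 0 ≤ dotB c x :=
  sum_nonneg fun j _ => mul_nonneg (hc j) (ite_nonneg zero_le_one le_rfl)

theorem dotB_le_dotB {c : Fin n → ℝ} (hc : ∀ j, 0 ≤ c j) {x y : Fin n → Bool}
    (hxy : ∀ j, x j = true → y j = true) : dotB c x ≤ dotB c y :=
  sum_le_sum fun j _ => by
    by_cases hx : x j = true
    · simp [hx, hxy j hx]
    · simp only [hx, Bool.false_eq_true, if_false, mul_zero]
      exact mul_nonneg (hc j) (ite_nonneg zero_le_one le_rfl)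

theorem dotB_update_of_eq_false {w : Fin n → ℝ} {x : Fin n → Bool} {i : Fin n}
    (hx : x i = false) (a : ℝ) : dotB (update w i a) x = dotB w x :=
  sum_congr rfl fun j _ => by
    rcases eq_or_ne j i with rfl | hj
    · simp [hx]
    · rw [update_of_ne hj]

theorem dotB_eq_add_dotB_update_zero {w : Fin n → ℝ} {x : Fin n → Bool} {i : Fin n}
    (hx : x i = true) : dotB w x = w i + dotB (update w i 0) x := by
  unfold dotB
  rw [← add_sum_erase _ _ (mem_univ i), ← add_sum_erase _ _ (mem_univ i), update_self, hx]
  simp only [if_true, mul_one, zero_add]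
  exact congrArg _ (sum_congr rfl fun j hj => by rw [update_of_ne (ne_of_mem_erase hj)])

theorem measurable_dotB (x : Fin n → Bool) : Measurable fun w : Fin n → ℝ => dotB w x :=
  Finset.measurable_sum _ fun j _ => (measurable_pi_apply j).mul_const _

end DotB

section Threshold

variable {n : ℕ} (p : Fin n → ℝ) (t ε : ℝ) (i : Fin n)

/-- The else-value `0` stands for `-∞`; it is harmless as profits are nonnegative. -/
noncomputable def bestProfitAvoiding (v : Fin n → ℝ) : ℝ :=
  univ.sup' univ_nonempty fun y => if y i = false ∧ dotB v y ≤ t then dotB p y else 0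

/-- The else-value `t + ε + 1` stands for `+∞`: any value beyond `t + ε` would do. -/
noncomputable def weightThreshold (v : Fin n → ℝ) : ℝ :=
  univ.inf' univ_nonempty fun x =>
    if x i = true ∧ bestProfitAvoiding p t i v < dotB p x then dotB v x else t + ε + 1

theorem measurable_bestProfitAvoiding : Measurable (bestProfitAvoiding p t i) := by
  have := Finset.measurable_sup' (f := fun y (v : Fin n → ℝ) =>
      if y i = false ∧ dotB v y ≤ t then dotB p y else 0) univ_nonempty fun y _ => by
    have hs : MeasurableSet {v : Fin n → ℝ | y i = false ∧ dotB v y ≤ t} :=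
      (MeasurableSet.const _).inter (measurableSet_le (measurable_dotB y) measurable_const)
    exact Measurable.ite hs measurable_const measurable_const
  convert this using 1
  funext v
  simp [bestProfitAvoiding, Finset.sup'_apply]

theorem measurable_weightThreshold : Measurable (weightThreshold p t ε i) := by
  have := Finset.measurable_inf' (f := fun x (v : Fin n → ℝ) =>
      if x i = true ∧ bestProfitAvoiding p t i v < dotB p x then dotB v x else t + ε + 1)
    univ_nonempty fun x _ => by
    have hs : MeasurableSet {v | x i = true ∧ bestProfitAvoiding p t i v < dotB p x} :=
      (MeasurableSet.const _).inter
        (measurableSet_lt (measurable_bestProfitAvoiding p t i) measurable_const)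
    exact Measurable.ite hs (measurable_dotB x) measurable_const
  convert this using 1
  funext v
  simp [weightThreshold, Finset.inf'_apply]

variable {p t ε i}

theorem le_bestProfitAvoiding {v : Fin n → ℝ} {y : Fin n → Bool} (hy : y i = false)
    (hyt : dotB v y ≤ t) : dotB p y ≤ bestProfitAvoiding p t i v :=
  le_sup'_of_le _ (mem_univ y) (by rw [if_pos ⟨hy, hyt⟩])

theorem bestProfitAvoiding_le {v : Fin n → ℝ} {M : ℝ} (hM : 0 ≤ M)
    (hmax : ∀ y : Fin n → Bool, y i = false → dotB v y ≤ t → dotB p y ≤ M) :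
    bestProfitAvoiding p t i v ≤ M :=
  sup'_le _ _ fun y _ => by
    split_ifs with h
    exacts [hmax y h.1 h.2, hM]

theorem weightThreshold_le {v : Fin n → ℝ} {x : Fin n → Bool} (hx : x i = true)
    (hpx : bestProfitAvoiding p t i v < dotB p x) : weightThreshold p t ε i v ≤ dotB v x :=
  inf'_le_of_le _ (mem_univ x) (by rw [if_pos ⟨hx, hpx⟩])

theorem lt_add_weightThreshold {w : Fin n → ℝ} (hwi : 0 ≤ w i) (hε : 0 ≤ ε)
    (hmax : ∀ y : Fin n → Bool, dotB w y ≤ t → dotB p y ≤ bestProfitAvoiding p t i (update w i 0)) :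
    t < w i + weightThreshold p t ε i (update w i 0) := by
  obtain ⟨x, -, hx⟩ := exists_mem_eq_inf' univ_nonempty fun x =>
    if x i = true ∧ bestProfitAvoiding p t i (update w i 0) < dotB p x then
      dotB (update w i 0) x else t + ε + 1
  rw [weightThreshold, hx]
  split_ifs with h
  · rw [← dotB_eq_add_dotB_update_zero h.1]
    by_contra! hxt
    exact (hmax x hxt).not_gt h.2
  · linarith

end Threshold

theorem exists_add_weightThreshold_mem_Ioc_of_pareto {n : ℕ} {p w : Fin n → ℝ}
    (hp : ∀ j, 0 ≤ p j) (hw : ∀ j, 0 ≤ w j) {t ε : ℝ} (ht : 0 ≤ t) {x : Fin n → Bool}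
    (hx : pareto p w x) (hxt : dotB w x ∈ Set.Ioc t (t + ε)) :
    ∃ i, w i + weightThreshold p t ε i (update w i 0) ∈ Set.Ioc t (t + ε) := by
  obtain ⟨y, hyt, hymax⟩ := (univ.filter fun y => dotB w y ≤ t).exists_max_image (dotB p)
    ⟨fun _ => false, by simp [dotB, ht]⟩
  replace hyt : dotB w y ≤ t := (mem_filter.1 hyt).2
  replace hymax : ∀ z, dotB w z ≤ t → dotB p z ≤ dotB p y := fun z hz =>
    hymax z (mem_filter.2 ⟨mem_univ z, hz⟩)
  have hpy : dotB p y < dotB p x := by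
    by_contra! h
    exact hx y ⟨h, hyt.trans hxt.1.le, Or.inr (hyt.trans_lt hxt.1)⟩
  obtain ⟨i, hxi, hyi⟩ : ∃ i, x i = true ∧ y i = false := by
    by_contra! h
    exact (dotB_le_dotB hp fun j hj => Bool.not_eq_false _ ▸ h j hj).not_gt hpy
  have hbest_le : bestProfitAvoiding p t i (update w i 0) ≤ dotB p y :=
    bestProfitAvoiding_le (dotB_nonneg hp y) fun z hzi hzt =>
      hymax z (dotB_update_of_eq_false hzi 0 ▸ hzt)
  have hle_best : dotB p y ≤ bestProfitAvoiding p t i (update w i 0) :=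
    le_bestProfitAvoiding hyi ((dotB_update_of_eq_false hyi 0).symm ▸ hyt)
  refine ⟨i, lt_add_weightThreshold (hw i) (by linarith [hxt.1, hxt.2])
    fun z hz => (hymax z hz).trans hle_best, ?_⟩
  calc w i + weightThreshold p t ε i (update w i 0) ≤ w i + dotB (update w i 0) x :=
        by gcongr; exact weightThreshold_le hxi (hbest_le.trans_lt hpy)
    _ = dotB w x := (dotB_eq_add_dotB_update_zero hxi).symm
    _ ≤ t + ε := hxt.2

theorem prob_pareto_in_interval_general {Ω : Type*} [MeasureSpace Ω] {n : ℕ}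
    (p : Fin n → ℝ) (hp : ∀ i, 0 ≤ p i)
    (W : Fin n → Ω → ℝ) (φ : ℝ)
    (hindep : ProbabilityTheory.iIndepFun W ℙ)
    (hnonneg : ∀ i, ∀ᵐ ω ∂ℙ, 0 ≤ W i ω)
    (hpdf : ∀ i, HasPDF (W i) ℙ)
    (hbound : ∀ i, ∀ᵐ x : ℝ, pdf (W i) ℙ volume x ≤ ENNReal.ofReal φ)
    (t ε : ℝ) (ht : 0 ≤ t) (hε : 0 < ε) :
    ℙ {ω | ∃ x : Fin n → Bool, pareto p (fun i => W i ω) x ∧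
        dotB (fun i => W i ω) x ∈ Set.Ioc t (t + ε)}
      ≤ ENNReal.ofReal (n * φ * ε) := by
  have hW : ∀ i, AEMeasurable (W i) ℙ := fun i => (hpdf i).aemeasurable'
  set B : Fin n → Set Ω := fun i => {ω | W i ω +
    weightThreshold p t ε i (update (fun j => W j ω) i 0) ∈ Set.Ioc t (t + ε)}
  have hcover : {ω | ∃ x : Fin n → Bool, pareto p (fun i => W i ω) x ∧
      dotB (fun i => W i ω) x ∈ Set.Ioc t (t + ε)} ≤ᵐ[ℙ] ⋃ i, B i := by
    filter_upwards [ae_all_iff.2 hnonneg] with ω hω ⟨x, hx, hxt⟩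
    exact Set.mem_iUnion.2 (exists_add_weightThreshold_mem_Ioc_of_pareto hp hω ht hx hxt)
  have hB : ∀ i, ℙ (B i) ≤ ENNReal.ofReal (φ * ε) := fun i =>
    have := hpdf i
    measure_add_comp_update_mem_Ioc_le hW hindep i (hbound i)
      (measurable_weightThreshold p t ε i) t hε.le
  calc _ ≤ ℙ (⋃ i, B i) := measure_mono_ae hcover
    _ ≤ ∑ i, ℙ (B i) := measure_iUnion_fintype_le _ _
    _ ≤ ∑ _i : Fin n, ENNReal.ofReal (φ * ε) := sum_le_sum fun i _ => hB i
    _ = ENNReal.ofReal (n * φ * ε) := by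
      rw [sum_const, card_univ, Fintype.card_fin, nsmul_eq_mul, mul_assoc,
        ENNReal.ofReal_mul (Nat.cast_nonneg n), ENNReal.ofReal_natCast]

/-- For fixed nonnegative profits and independent nonnegative weights with densities
bounded by `φ`: for every `t ≥ 0` and `ε > 0`, the probability that some Pareto-optimal
solution has weight in `(t, t+ε]` is at most `n·φ·ε`. -/
theorem prob_pareto_in_interval {Ω : Type*} [MeasureSpace Ω]
    [IsProbabilityMeasure (ℙ : Measure Ω)] {n : ℕ}
    (p : Fin n → ℝ) (hp : ∀ i, 0 ≤ p i)
    (W : Fin n → Ω → ℝ) (φ : ℝ) (hφ : 0 < φ)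
    (hindep : ProbabilityTheory.iIndepFun W ℙ)
    (hnonneg : ∀ i, ∀ᵐ ω ∂ℙ, 0 ≤ W i ω)
    (hpdf : ∀ i, HasPDF (W i) ℙ)
    (hbound : ∀ i, ∀ᵐ x : ℝ, pdf (W i) ℙ volume x ≤ ENNReal.ofReal φ)
    (t ε : ℝ) (ht : 0 ≤ t) (hε : 0 < ε) :
    ℙ {ω | ∃ x : Fin n → Bool, pareto p (fun i => W i ω) x ∧
        dotB (fun i => W i ω) x ∈ Set.Ioc t (t + ε)}
      ≤ ENNReal.ofReal (n * φ * ε) :=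
  prob_pareto_in_interval_general p hp W φ hindep hnonneg hpdf hbound t ε ht hε
end

section
/- Fix t ≥ 0, profits p ∈ (ℝ≥0)^n, and nonnegative weights w ∈ (ℝ≥0)^n with all solution profits and weights distinct. Define the winner x* = argmax{p·x : w·x ≤ t} and the loser x̂ = argmin{w·x : p·x > p·x*} (if it exists), and Λ(t) = w·x̂ − t (∞ if no loser). For each i, define x*,i and x̂^i analogously but with winners restricted to solutions with x_i = 0 and losers restricted to solutions with x_i = 1, and Λ^i(t) accordingly. Then either Λ(t) = ∞ or there exists an index i ∈ [n] with Λ(t) = Λ^i(t). -/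
/-! The global winner `x*` avoids some item `i` that the global loser `x̂` contains: otherwise
`x̂ ⊆ x*`, so `x̂` would be feasible and beat `x*`. For such an `i`, `x*` is also the winner
among solutions avoiding `i`, and `x̂` the loser among solutions containing `i`. -/

theorem dotB_mono {n : ℕ} {c : Fin n → ℝ} (hc : ∀ i, 0 ≤ c i) {x y : Fin n → Bool}
    (hxy : x ≤ y) : dotB c x ≤ dotB c y := by
  refine Finset.sum_le_sum fun i _ => mul_le_mul_of_nonneg_left ?_ (hc i)
  have := Bool.le_iff_imp.1 (hxy i)
  split_ifs <;> simp_all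

theorem exists_mem_loser_not_mem_winner {n : ℕ} {p w : Fin n → ℝ} (hw : ∀ i, 0 ≤ w i) {t : ℝ}
    {xstar xhat : Fin n → Bool}
    (hxstar : dotB w xstar ≤ t ∧ ∀ y : Fin n → Bool, dotB w y ≤ t → dotB p y ≤ dotB p xstar)
    (hbeat : dotB p xstar < dotB p xhat) :
    ∃ i, xhat i = true ∧ xstar i = false := by
  by_contra! hsub
  have hle : xhat ≤ xstar := fun i => Bool.le_iff_imp.2 fun h => by simpa using hsub i h
  have hfeas : dotB w xhat ≤ t := (dotB_mono hw hle).trans hxstar.1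
  exact (hxstar.2 xhat hfeas).not_gt hbeat

theorem lambda_eq_restricted_lambda_general {n : ℕ} (p w : Fin n → ℝ)
    (hw : ∀ i, 0 ≤ w i)
    (t : ℝ)
    (xstar : Fin n → Bool)
    (hxstar : dotB w xstar ≤ t ∧ ∀ y : Fin n → Bool, dotB w y ≤ t → dotB p y ≤ dotB p xstar)
    (xhat : Fin n → Bool)
    (hxhat : dotB p xstar < dotB p xhat ∧
      ∀ y : Fin n → Bool, dotB p xstar < dotB p y → dotB w xhat ≤ dotB w y) :
    ∃ (i : Fin n) (xsi xhi : Fin n → Bool),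
      (xsi i = false ∧ dotB w xsi ≤ t ∧
        ∀ y : Fin n → Bool, y i = false → dotB w y ≤ t → dotB p y ≤ dotB p xsi) ∧
      (xhi i = true ∧ dotB p xsi < dotB p xhi ∧
        ∀ y : Fin n → Bool, y i = true → dotB p xsi < dotB p y → dotB w xhi ≤ dotB w y) ∧
      dotB w xhi - t = dotB w xhat - t := by
  obtain ⟨i, hhat, hstar⟩ := exists_mem_loser_not_mem_winner hw hxstar hxhat.1
  exact ⟨i, xstar, xhat, ⟨hstar, hxstar.1, fun y _ hy => hxstar.2 y hy⟩,
    ⟨hhat, hxhat.1, fun y _ hy => hxhat.2 y hy⟩, rfl⟩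

/-- If the loser `xhat` exists (so `Λ(t) ≠ ∞`), then there is an index `i` such that
`Λ(t) = Λ^i(t)`: there are a restricted winner `xsi` (among solutions without item `i`)
and a restricted loser `xhi` (among solutions containing item `i`) with
`w·x̂ⁱ − t = w·x̂ − t`. -/
theorem lambda_eq_restricted_lambda {n : ℕ} (p w : Fin n → ℝ)
    (hp : ∀ i, 0 ≤ p i) (hw : ∀ i, 0 ≤ w i)
    (hpinj : Function.Injective (dotB p)) (hwinj : Function.Injective (dotB w))
    (t : ℝ) (ht : 0 ≤ t)
    (xstar : Fin n → Bool)
    (hxstar : dotB w xstar ≤ t ∧ ∀ y : Fin n → Bool, dotB w y ≤ t → dotB p y ≤ dotB p xstar)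
    (xhat : Fin n → Bool)
    (hxhat : dotB p xstar < dotB p xhat ∧
      ∀ y : Fin n → Bool, dotB p xstar < dotB p y → dotB w xhat ≤ dotB w y) :
    ∃ (i : Fin n) (xsi xhi : Fin n → Bool),
      (xsi i = false ∧ dotB w xsi ≤ t ∧
        ∀ y : Fin n → Bool, y i = false → dotB w y ≤ t → dotB p y ≤ dotB p xsi) ∧
      (xhi i = true ∧ dotB p xsi < dotB p xhi ∧
        ∀ y : Fin n → Bool, y i = true → dotB p xsi < dotB p y → dotB w xhi ≤ dotB w y) ∧
      dotB w xhi - t = dotB w xhat - t :=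
  lambda_eq_restricted_lambda_general p w hw t xstar hxstar xhat hxhat
end

section
/- Let n points be drawn independently and uniformly at random from the unit square [0,1]². Then the expected number of Pareto-optimal points (points not dominated by any other point, where (a,b) dominates (c,d) if a ≥ c and b ≥ d with at least one strict) is O(log n). More precisely, the expected number equals the harmonic number H_n = Σ_{k=1}^n 1/k. -/
open MeasureTheory
open scoped ProbabilityTheory ENNReal

/-- The number of Pareto-optimal (maximal) points among `x 0, …, x (n-1)` in the plane:
a point is Pareto-optimal if no other point weakly dominates it coordinatewise while
being different. -/
noncomputable def paretoPtCount {n : ℕ} (x : Fin n → ℝ × ℝ) : ℕ := by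
  classical
  exact (Finset.univ.filter fun i : Fin n =>
    ∀ j : Fin n, j ≠ i → ¬((x i).1 ≤ (x j).1 ∧ (x i).2 ≤ (x j).2 ∧ x j ≠ x i)).card

/-!
By linearity of expectation the expected number of maxima is the sum over `i` of the
probability that the `i`-th point is maximal. Given its position `p = (u, v)`, each of the
other `n - 1` points independently avoids the quadrant `[u, 1] × [v, 1]` with probability
`1 - (1 - u)(1 - v) = u + (1 - u) v`, so by Fubini this probability is
`∫∫ (u + (1 - u) v)^(n-1) dv du = ∫ (1 + u + ⋯ + u^(n-1)) / n du = H_n / n`.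
-/

open Set
open scoped Finset

section Counting

variable {α ι : Type*} [Fintype ι] {s : ι → Set α}

open scoped Classical in
theorem natCast_card_filter_mem_eq_sum_indicator (x : α) :
    (#{i | x ∈ s i} : ℝ≥0∞) = ∑ i, (s i).indicator 1 x := by
  simp only [Finset.natCast_card_filter, indicator_apply, Pi.one_apply]

variable [MeasurableSpace α]

open scoped Classical in
theorem measurable_card_filter_mem (hs : ∀ i, MeasurableSet (s i)) :
    Measurable fun x => (#{i | x ∈ s i} : ℝ≥0∞) := by
  simp_rw [natCast_card_filter_mem_eq_sum_indicator]
  exact Finset.measurable_sum _ fun i _ => measurable_const.indicator (hs i)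

open scoped Classical in
theorem lintegral_card_filter_mem (μ : Measure α) (hs : ∀ i, MeasurableSet (s i)) :
    ∫⁻ x, (#{i | x ∈ s i} : ℝ≥0∞) ∂μ = ∑ i, μ (s i) := by
  simp_rw [natCast_card_filter_mem_eq_sum_indicator]
  rw [lintegral_finsetSum (f := fun i => (s i).indicator 1) _
    fun i _ => measurable_const.indicator (hs i)]
  simp_rw [lintegral_indicator_one (hs _)]

end Counting

theorem pi_setOf_forall_ne_mem {α : Type*} [MeasurableSpace α] (ν : Measure α) [SigmaFinite ν]
    {m : ℕ} (i : Fin (m + 1)) {R : Set (α × α)} (hR : MeasurableSet R) :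
    Measure.pi (fun _ => ν) {x | ∀ j ≠ i, (x i, x j) ∈ R}
      = ∫⁻ p, ν (Prod.mk p ⁻¹' R) ^ m ∂ν := by
  set B : Set (α × (Fin m → α)) := {z | ∀ k, (z.1, z.2 k) ∈ R}
  have hB : MeasurableSet B := by
    simp_rw [B, ofPred_forall]
    exact .iInter fun k => hR.preimage (by fun_prop)
  have hpre : {x : Fin (m + 1) → α | ∀ j ≠ i, (x i, x j) ∈ R}
      = MeasurableEquiv.piFinSuccAbove (fun _ => α) i ⁻¹' B := by
    ext x
    simp only [mem_ofPred_eq, Set.mem_preimage, B]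
    exact ⟨fun h k => h _ (Fin.succAbove_ne i k), fun h j hj => by
      obtain ⟨k, rfl⟩ := Fin.exists_succAbove_eq hj
      exact h k⟩
  have hslice (p : α) : Prod.mk p ⁻¹' B = univ.pi fun _ => Prod.mk p ⁻¹' R := by
    ext y; simp [B]
  rw [hpre, (measurePreserving_piFinSuccAbove (fun _ => ν) i).measure_preimage
    hB.nullMeasurableSet, Measure.prod_apply hB]
  simp_rw [hslice, Measure.pi_pi, Finset.prod_const, Finset.card_univ, Fintype.card_fin]

theorem map_eq_restrict_of_isUniform {Ω E : Type*} [MeasurableSpace Ω] [MeasurableSpace E]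
    {P : Measure Ω} {μ : Measure E} {X : Ω → E} {s : Set E} (hX : pdf.IsUniform X s P μ)
    (hs : μ s = 1) : P.map X = μ.restrict s := by
  rw [hX, ProbabilityTheory.cond, hs, inv_one, one_smul]

theorem measurableSet_lt_prod {α : Type*} [MeasurableSpace α] {f g : α → ℝ × ℝ}
    (hf : Measurable f) (hg : Measurable g) : MeasurableSet {a | f a < g a} := by
  simp_rw [lt_iff_le_and_ne]
  exact (measurableSet_le hf hg).inter (measurableSet_eq_fun hf hg).compl

abbrev unitSquare : Set (ℝ × ℝ) := Icc 0 1 ×ˢ Icc 0 1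

theorem volume_unitSquare : volume unitSquare = 1 := by
  rw [Measure.volume_eq_prod, Measure.prod_prod, Real.volume_Icc]
  norm_num

instance : IsProbabilityMeasure (volume.restrict unitSquare) :=
  ⟨by rw [Measure.restrict_apply_univ, volume_unitSquare]⟩

theorem one_sub_mul_one_sub_mem_unitInterval {p : ℝ × ℝ} (hp : p ∈ unitSquare) :
    (1 - p.1) * (1 - p.2) ∈ unitInterval :=
  unitInterval.mul_mem (Icc.mem_iff_one_sub_mem.1 hp.1) (Icc.mem_iff_one_sub_mem.1 hp.2)

theorem restrict_unitSquare_setOf_not_lt {p : ℝ × ℝ} (hp : p ∈ unitSquare) :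
    volume.restrict unitSquare {q | ¬p < q} = ENNReal.ofReal (1 - (1 - p.1) * (1 - p.2)) := by
  have hIci : Ici p ∩ unitSquare = Icc p.1 1 ×ˢ Icc p.2 1 := by
    ext q
    simp only [mem_inter_iff, mem_Ici, mem_prod, mem_Icc, Prod.le_def]
    constructor <;> intro h <;> refine ⟨⟨?_, ?_⟩, ?_, ?_⟩ <;> grind
  have hdom : volume.restrict unitSquare (Ioi p) = ENNReal.ofReal ((1 - p.1) * (1 - p.2)) := by
    rw [measure_congr Ioi_ae_eq_Ici,
      Measure.restrict_apply' (measurableSet_Icc.prod measurableSet_Icc), hIci,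
      Measure.volume_eq_prod, Measure.prod_prod, Real.volume_Icc, Real.volume_Icc,
      ENNReal.ofReal_mul (sub_nonneg.2 hp.1.2)]
  have hIoi : MeasurableSet (Ioi p) := measurableSet_lt_prod measurable_const measurable_id
  rw [show {q | ¬p < q} = (Ioi p)ᶜ from rfl, measure_compl hIoi (measure_ne_top _ _), hdom,
    measure_univ, ← ENNReal.ofReal_one,
    ← ENNReal.ofReal_sub _ (one_sub_mul_one_sub_mem_unitInterval hp).1]

theorem intervalIntegral_add_one_sub_mul_pow (u : ℝ) (m : ℕ) :
    ∫ v in (0 : ℝ)..1, (u + (1 - u) * v) ^ m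
      = (∑ j ∈ Finset.range (m + 1), u ^ j) / (m + 1) := by
  rcases eq_or_ne u 1 with rfl | hu
  · have hm : (m + 1 : ℝ) ≠ 0 := by positivity
    simp [hm]
  · have hc : 1 - u ≠ 0 := sub_ne_zero.2 hu.symm
    have hc' : u - 1 ≠ 0 := sub_ne_zero.2 hu
    simp_rw [fun v : ℝ => add_comm u ((1 - u) * v)]
    rw [intervalIntegral.integral_comp_mul_add (· ^ m) hc u, mul_zero, zero_add, mul_one,
      sub_add_cancel, integral_pow, geom_sum_eq hu, smul_eq_mul]
    field_simp
    ring

theorem intervalIntegral_geom_sum (m : ℕ) :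
    ∫ u in (0 : ℝ)..1, ∑ j ∈ Finset.range (m + 1), u ^ j
      = ∑ k ∈ Finset.range (m + 1), (1 : ℝ) / (k + 1) := by
  rw [intervalIntegral.integral_finsetSum fun j _ => intervalIntegral.intervalIntegrable_pow j]
  simp [integral_pow]

theorem integrableOn_unitSquare_pow (m : ℕ) :
    IntegrableOn (fun p : ℝ × ℝ => (1 - (1 - p.1) * (1 - p.2)) ^ m) unitSquare :=
  (by fun_prop : Continuous fun p : ℝ × ℝ => (1 - (1 - p.1) * (1 - p.2)) ^ m).continuousOn
    |>.integrableOn_compact (isCompact_Icc.prod isCompact_Icc : IsCompact unitSquare)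

theorem setIntegral_unitSquare_pow (m : ℕ) :
    ∫ p in unitSquare, (1 - (1 - p.1) * (1 - p.2)) ^ m
      = (∑ k ∈ Finset.range (m + 1), (1 : ℝ) / (k + 1)) / (m + 1) := by
  rw [Measure.volume_eq_prod, setIntegral_prod _ (integrableOn_unitSquare_pow m)]
  simp_rw [integral_Icc_eq_integral_Ioc, ← intervalIntegral.integral_of_le zero_le_one,
    show ∀ u v : ℝ, 1 - (1 - u) * (1 - v) = u + (1 - u) * v by intros; ring,
    intervalIntegral_add_one_sub_mul_pow, intervalIntegral.integral_div,
    intervalIntegral_geom_sum]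

/-- `<` is the product order: `x i < x j` iff `x i ≤ x j` coordinatewise and `x i ≠ x j`. -/
def paretoOptimalSet {n : ℕ} (i : Fin n) : Set (Fin n → ℝ × ℝ) :=
  {x | ∀ j ≠ i, ¬x i < x j}

open scoped Classical in
theorem paretoPtCount_eq_card {n : ℕ} (x : Fin n → ℝ × ℝ) :
    paretoPtCount x = #{i | x ∈ paretoOptimalSet i} := by
  simp only [paretoPtCount, paretoOptimalSet, mem_ofPred_eq, lt_iff_le_and_ne, Prod.le_def,
    and_assoc, ne_comm]

theorem measurableSet_paretoOptimalSet {n : ℕ} (i : Fin n) :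
    MeasurableSet (paretoOptimalSet i) := by
  simp_rw [paretoOptimalSet, ofPred_forall]
  exact .iInter fun j => .iInter fun _ =>
    (measurableSet_lt_prod (measurable_pi_apply i) (measurable_pi_apply j)).compl

theorem pi_unitSquare_paretoOptimalSet {n : ℕ} (i : Fin n) :
    Measure.pi (fun _ => volume.restrict unitSquare) (paretoOptimalSet i)
      = ENNReal.ofReal ((∑ k ∈ Finset.range n, (1 : ℝ) / (k + 1)) / n) := by
  obtain ⟨m, rfl⟩ : ∃ m, n = m + 1 := Nat.exists_eq_add_one_of_ne_zero i.pos.ne'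
  have hnonneg : ∀ᵐ p ∂volume.restrict unitSquare, 0 ≤ 1 - (1 - p.1) * (1 - p.2) := by
    filter_upwards [ae_restrict_mem (measurableSet_Icc.prod measurableSet_Icc)] with p hp
    exact sub_nonneg.2 (one_sub_mul_one_sub_mem_unitInterval hp).2
  have hsection : ∀ᵐ p ∂volume.restrict unitSquare,
      volume.restrict unitSquare {q | ¬p < q} ^ m
        = ENNReal.ofReal ((1 - (1 - p.1) * (1 - p.2)) ^ m) := by
    filter_upwards [ae_restrict_mem (measurableSet_Icc.prod measurableSet_Icc), hnonneg]
      with p hp hp'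
    rw [restrict_unitSquare_setOf_not_lt hp, ENNReal.ofReal_pow hp']
  refine (pi_setOf_forall_ne_mem _ i
    (measurableSet_lt_prod measurable_fst measurable_snd).compl).trans
    ((lintegral_congr_ae hsection).trans ?_)
  rw [← ofReal_integral_eq_lintegral_ofReal (integrableOn_unitSquare_pow m)
    (hnonneg.mono fun p hp => pow_nonneg hp m), setIntegral_unitSquare_pow, Nat.cast_add_one]

theorem expected_pareto_points_eq_harmonic_general {Ω : Type*} [MeasureSpace Ω] (n : ℕ)
    (X : Fin n → Ω → ℝ × ℝ)
    (hindep : ProbabilityTheory.iIndepFun X ℙ)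
    (hunif : ∀ i, pdf.IsUniform (X i) (Set.Icc 0 1 ×ˢ Set.Icc 0 1) ℙ) :
    ∫⁻ ω, (paretoPtCount (fun i => X i ω) : ℝ≥0∞) ∂ℙ
      = ENNReal.ofReal (∑ k ∈ Finset.range n, (1 : ℝ) / (k + 1)) := by
  classical
  have hX (i : Fin n) : AEMeasurable (X i) ℙ :=
    (hunif i).aemeasurable (by rw [volume_unitSquare]; simp) (by rw [volume_unitSquare]; simp)
  have hlaw : Measure.map (fun ω i => X i ω) ℙ
      = Measure.pi fun _ => volume.restrict unitSquare := by
    rw [hindep.map_fun_eq_pi_map hX]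
    simp_rw [map_eq_restrict_of_isUniform (hunif _) volume_unitSquare]
  calc ∫⁻ ω, (paretoPtCount (fun i => X i ω) : ℝ≥0∞) ∂ℙ
      = ∫⁻ x, (#{i | x ∈ paretoOptimalSet i} : ℝ≥0∞)
          ∂Measure.map (fun ω i => X i ω) ℙ := by
        simp_rw [paretoPtCount_eq_card]
        exact (lintegral_map'
          (measurable_card_filter_mem measurableSet_paretoOptimalSet).aemeasurable
          (aemeasurable_pi_lambda _ hX)).symm
    _ = ∑ _ : Fin n, ENNReal.ofReal ((∑ k ∈ Finset.range n, (1 : ℝ) / (k + 1)) / n) := by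
        rw [hlaw, lintegral_card_filter_mem _ measurableSet_paretoOptimalSet]
        simp_rw [pi_unitSquare_paretoOptimalSet]
    _ = ENNReal.ofReal (∑ k ∈ Finset.range n, (1 : ℝ) / (k + 1)) := by
        rw [Finset.sum_const, Finset.card_univ, Fintype.card_fin, nsmul_eq_mul,
          ← ENNReal.ofReal_natCast, ← ENNReal.ofReal_mul n.cast_nonneg,
          mul_div_cancel_of_imp' fun h => by simp [Nat.cast_eq_zero.1 h]]

/-- For `n` i.i.d. points uniform on the unit square, the expected number of
Pareto-optimal points equals the harmonic number `H_n = ∑_{k=1}^n 1/k` (which is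
`O(log n)`). -/
theorem expected_pareto_points_eq_harmonic {Ω : Type*} [MeasureSpace Ω]
    [IsProbabilityMeasure (ℙ : Measure Ω)] (n : ℕ)
    (X : Fin n → Ω → ℝ × ℝ)
    (hindep : ProbabilityTheory.iIndepFun X ℙ)
    (hunif : ∀ i, pdf.IsUniform (X i) (Set.Icc 0 1 ×ˢ Set.Icc 0 1) ℙ) :
    ∫⁻ ω, (paretoPtCount (fun i => X i ω) : ℝ≥0∞) ∂ℙ
      = ENNReal.ofReal (∑ k ∈ Finset.range n, (1 : ℝ) / (k + 1)) :=
  expected_pareto_points_eq_harmonic_general n X hindep hunif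
end

section
/- Let S ⊆ {0,1}^n be nonempty and let c_1,...,c_n be independent random variables each with density bounded by φ. Define the winner gap Δ = c·x** − c·x*, where x* is the minimizer of c·x over S and x** is the minimizer over S \ {x*}. Then for every ε > 0, Pr[Δ ≤ ε] ≤ 2nφε. -/
/-
If the gap between the best and the second-best solution is at most `ε`, the two differ in some
coordinate `i`, and one of them is the best solution with `x i = true` while the other is the best
with `x i = false`. Their costs differ by `c i - t i`, where the threshold `t i` depends only on the
coefficients `c j`, `j ≠ i`. So `c i` falls within `ε` of `t i`; since `c i` is independent of `t i`
and has density at most `φ`, this happens with probability at most `2φε`. A union bound over the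
`n` coordinates finishes the proof.
-/

open MeasureTheory
open scoped ProbabilityTheory

open ProbabilityTheory Finset
open scoped ENNReal

section MinOver

variable {β : Type*}

/-- The minimum of `f` on `T` (junk value `0` when `T` is empty). -/
noncomputable def minOver (T : Finset β) (f : β → ℝ) : ℝ :=
  if hT : T.Nonempty then T.inf' hT f else 0

theorem minOver_eq_of_mem {T : Finset β} {f : β → ℝ} {x : β} (hx : x ∈ T)
    (hmin : ∀ y ∈ T, f x ≤ f y) : minOver T f = f x := by
  rw [minOver, dif_pos ⟨x, hx⟩]
  exact le_antisymm (inf'_le f hx) (le_inf' _ f hmin)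

theorem minOver_congr {T : Finset β} {f g : β → ℝ} (hfg : ∀ x ∈ T, f x = g x) :
    minOver T f = minOver T g := by
  unfold minOver
  split_ifs with hT
  exacts [inf'_congr hT rfl hfg, rfl]

theorem minOver_const_add {T : Finset β} (hT : T.Nonempty) (a : ℝ) (f : β → ℝ) :
    minOver T (fun x => a + f x) = a + minOver T f := by
  rw [minOver, minOver, dif_pos hT, dif_pos hT]
  exact (map_finset_inf' (OrderIso.addLeft a) hT f).symm

theorem measurable_minOver {α : Type*} [MeasurableSpace α] (T : Finset β) {f : β → α → ℝ}
    (hf : ∀ x, Measurable (f x)) : Measurable fun a => minOver T fun x => f x a := by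
  unfold minOver
  split_ifs with hT
  · rw [show (fun a => T.inf' hT fun x => f x a) = T.inf' hT f from
      funext fun a => (Finset.inf'_apply hT f a).symm]
    exact inf'_induction hT _ (fun _ hg _ hh => hg.inf hh) fun x _ => hf x
  · exact measurable_const

/-- The two parts of `S` cut out by `p` have minima `f xs` and `f xss`. -/
theorem abs_minOver_filter_sub_minOver_filter {S : Finset β} {f : β → ℝ} (p : β → Bool)
    {xs xss : β} (hxs : xs ∈ S) (hxss : xss ∈ S) (hp : p xs ≠ p xss)
    (hmin : ∀ y ∈ S, f xs ≤ f y) (hmin2 : ∀ y ∈ S, y ≠ xs → f xss ≤ f y) :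
    |minOver (S.filter (p · = true)) f - minOver (S.filter (p · = false)) f| = f xss - f xs := by
  have hbest : minOver (S.filter (p · = p xs)) f = f xs :=
    minOver_eq_of_mem (mem_filter.2 ⟨hxs, rfl⟩) fun y hy => hmin y (mem_filter.1 hy).1
  have hsecond : minOver (S.filter (p · = p xss)) f = f xss := by
    refine minOver_eq_of_mem (mem_filter.2 ⟨hxss, rfl⟩) fun y hy => ?_
    obtain ⟨hyS, hyp⟩ := mem_filter.1 hy
    exact hmin2 y hyS fun hyxs => hp (hyxs ▸ hyp)
  have hle := hmin xss hxss
  rcases Bool.eq_false_or_eq_true (p xs) with hxs_true | hxs_false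
  · have hxss_false : p xss = false := by
      revert hp; rw [hxs_true]; cases p xss <;> decide
    rw [hxs_true] at hbest
    rw [hxss_false] at hsecond
    rw [hbest, hsecond, abs_of_nonpos (by linarith)]
    ring
  · have hxss_true : p xss = true := by
      revert hp; rw [hxs_false]; cases p xss <;> decide
    rw [hxs_false] at hbest
    rw [hxss_true] at hsecond
    rw [hbest, hsecond, abs_of_nonneg (by linarith)]

end MinOver

section Threshold

variable {n : ℕ}

def restDot (i : Fin n) (w : ({i}ᶜ : Finset (Fin n)) → ℝ) (x : Fin n → Bool) : ℝ :=
  ∑ j, w j * if x j then 1 else 0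

theorem dotB_eq_add_restDot (i : Fin n) (v : Fin n → ℝ) (x : Fin n → Bool) :
    dotB v x = v i * (if x i then 1 else 0) + restDot i (fun j => v j) x := by
  rw [dotB, restDot, Fintype.sum_eq_add_sum_compl i,
    Finset.sum_coe_sort _ fun j => v j * if x j then 1 else 0]

theorem measurable_restDot (i : Fin n) (x : Fin n → Bool) :
    Measurable fun w => restDot i w x :=
  Finset.measurable_sum _ fun j _ => (measurable_pi_apply j).mul_const _

/-- The value of the `i`-th coefficient at which the best solution in `S` with `x i = true`
and the best one with `x i = false` tie. -/
noncomputable def flipThreshold (S : Finset (Fin n → Bool)) (i : Fin n)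
    (w : ({i}ᶜ : Finset (Fin n)) → ℝ) : ℝ :=
  minOver (S.filter (· i = false)) (restDot i w) - minOver (S.filter (· i = true)) (restDot i w)

theorem measurable_flipThreshold (S : Finset (Fin n → Bool)) (i : Fin n) :
    Measurable (flipThreshold S i) :=
  (measurable_minOver _ (measurable_restDot i)).sub (measurable_minOver _ (measurable_restDot i))

theorem exists_abs_sub_flipThreshold_eq {S : Finset (Fin n → Bool)} {v : Fin n → ℝ}
    {xs xss : Fin n → Bool} (hxs : xs ∈ S) (hxss : xss ∈ S) (hne : xs ≠ xss)
    (hmin : ∀ y ∈ S, dotB v xs ≤ dotB v y) (hmin2 : ∀ y ∈ S, y ≠ xs → dotB v xss ≤ dotB v y) :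
    ∃ i, |v i - flipThreshold S i (fun j => v j)| = dotB v xss - dotB v xs := by
  obtain ⟨i, hi⟩ := Function.ne_iff.1 hne
  refine ⟨i, ?_⟩
  have htrue : (S.filter (· i = true)).Nonempty := by
    rcases Bool.eq_false_or_eq_true (xs i) with h | h
    · exact ⟨xs, mem_filter.2 ⟨hxs, h⟩⟩
    · refine ⟨xss, mem_filter.2 ⟨hxss, ?_⟩⟩
      revert hi; rw [h]; cases xss i <;> decide
  have hdot_true : minOver (S.filter (· i = true)) (dotB v)
      = v i + minOver (S.filter (· i = true)) (restDot i fun j => v j) := by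
    rw [← minOver_const_add htrue]
    exact minOver_congr fun x hx => by rw [dotB_eq_add_restDot i, (mem_filter.1 hx).2]; simp
  have hdot_false : minOver (S.filter (· i = false)) (dotB v)
      = minOver (S.filter (· i = false)) (restDot i fun j => v j) :=
    minOver_congr fun x hx => by rw [dotB_eq_add_restDot i, (mem_filter.1 hx).2]; simp
  rw [← abs_minOver_filter_sub_minOver_filter (· i) hxs hxss hi hmin hmin2, hdot_true,
    hdot_false, flipThreshold]
  ring_nf

end Threshold

theorem ENNReal.ofReal_mul_ofReal_le (p q : ℝ) :
    ENNReal.ofReal p * ENNReal.ofReal q ≤ ENNReal.ofReal (p * q) := by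
  rcases le_total 0 p with hp | hp
  · exact (ENNReal.ofReal_mul hp).ge
  · simp [ENNReal.ofReal_of_nonpos hp]

section Density

variable {Ω E : Type*} [MeasurableSpace Ω] [MeasurableSpace E]

theorem map_le_smul_of_pdf_le {μ : Measure Ω} {ν : Measure E} {X : Ω → E} [HasPDF X μ ν]
    {C : ℝ≥0∞} (hC : ∀ᵐ x ∂ν, pdf X μ ν x ≤ C) : μ.map X ≤ C • ν := by
  rw [map_eq_withDensity_pdf X μ ν, ← withDensity_const]
  exact withDensity_mono hC

/-- Conditioning on `Y`, the event asks `X` to lie in an interval of length `2ε`. -/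
theorem measure_abs_sub_le_le_of_indepFun {μ : Measure Ω} [IsProbabilityMeasure μ]
    {X : Ω → ℝ} {Y : Ω → E} (hX : AEMeasurable X μ) (hY : AEMeasurable Y μ)
    (hXY : IndepFun X Y μ) {C : ℝ≥0∞} (hC : μ.map X ≤ C • volume) {h : E → ℝ}
    (hh : Measurable h) (ε : ℝ) :
    μ {ω | |X ω - h (Y ω)| ≤ ε} ≤ C * ENNReal.ofReal (2 * ε) := by
  set B : Set (E × ℝ) := {p | |p.2 - h p.1| ≤ ε}
  have hB : MeasurableSet B :=
    measurableSet_le (measurable_snd.sub (hh.comp measurable_fst)).abs measurable_const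
  have hslice (y : E) : μ.map X (Prod.mk y ⁻¹' B) ≤ C * ENNReal.ofReal (2 * ε) := by
    have hIcc : Prod.mk y ⁻¹' B = Set.Icc (h y - ε) (h y + ε) := by
      ext x
      simp only [B, Set.mem_preimage, Set.mem_Icc, abs_le]
      constructor <;> rintro ⟨_, _⟩ <;> constructor <;> linarith
    calc μ.map X (Prod.mk y ⁻¹' B) ≤ C * volume (Set.Icc (h y - ε) (h y + ε)) := hIcc ▸ hC _
      _ = C * ENNReal.ofReal (2 * ε) := by rw [Real.volume_Icc]; ring_nf
  calc μ {ω | |X ω - h (Y ω)| ≤ ε} = (μ.map Y).prod (μ.map X) B := by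
        rw [← (indepFun_iff_map_prod_eq_prod_map_map hY hX).1 hXY.symm,
          Measure.map_apply_of_aemeasurable (hY.prodMk hX) hB]
        rfl
    _ = ∫⁻ y, μ.map X (Prod.mk y ⁻¹' B) ∂μ.map Y := Measure.prod_apply hB
    _ ≤ ∫⁻ _, C * ENNReal.ofReal (2 * ε) ∂μ.map Y := lintegral_mono hslice
    _ = C * ENNReal.ofReal (2 * ε) := by
        rw [lintegral_const, Measure.map_apply_of_aemeasurable hY MeasurableSet.univ]
        simp

end Density

theorem winner_gap_general {Ω : Type*} [MeasureSpace Ω]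
    [IsProbabilityMeasure (ℙ : Measure Ω)] {n : ℕ}
    (S : Finset (Fin n → Bool))
    (c : Fin n → Ω → ℝ) (φ : ℝ)
    (hindep : ProbabilityTheory.iIndepFun c ℙ)
    (hpdf : ∀ i, HasPDF (c i) ℙ)
    (hbound : ∀ i, ∀ᵐ x : ℝ, pdf (c i) ℙ volume x ≤ ENNReal.ofReal φ)
    (ε : ℝ) :
    ℙ {ω | ∃ xs ∈ S, ∃ xss ∈ S, xs ≠ xss ∧
        (∀ y ∈ S, dotB (fun i => c i ω) xs ≤ dotB (fun i => c i ω) y) ∧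
        (∀ y ∈ S, y ≠ xs → dotB (fun i => c i ω) xss ≤ dotB (fun i => c i ω) y) ∧
        dotB (fun i => c i ω) xss - dotB (fun i => c i ω) xs ≤ ε}
      ≤ ENNReal.ofReal (2 * n * φ * ε) := by
  have hc (i : Fin n) : AEMeasurable (c i) ℙ := HasPDF.aemeasurable (c i) ℙ volume
  let rest (i : Fin n) (ω : Ω) (j : ({i}ᶜ : Finset (Fin n))) : ℝ := c j ω
  have hcoord (i : Fin n) :
      ℙ {ω | |c i ω - flipThreshold S i (rest i ω)| ≤ ε}
        ≤ ENNReal.ofReal φ * ENNReal.ofReal (2 * ε) := by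
    have hindep_i : IndepFun (c i) (rest i) ℙ :=
      (hindep.indepFun_finset₀ {i} {i}ᶜ disjoint_compl_right hc).comp
        (measurable_pi_apply (⟨i, mem_singleton_self i⟩ : ({i} : Finset (Fin n))))
        measurable_id
    exact measure_abs_sub_le_le_of_indepFun (hc i) (aemeasurable_pi_lambda (rest i) fun j => hc j)
      hindep_i (map_le_smul_of_pdf_le (hbound i)) (measurable_flipThreshold S i) ε
  calc _ ≤ ℙ (⋃ i, {ω | |c i ω - flipThreshold S i (rest i ω)| ≤ ε}) := by
        refine measure_mono fun ω ⟨xs, hxs, xss, hxss, hne, hmin, hmin2, hgap⟩ => ?_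
        obtain ⟨i, hi⟩ := exists_abs_sub_flipThreshold_eq hxs hxss hne hmin hmin2
        exact Set.mem_iUnion.2 ⟨i, hi.le.trans hgap⟩
    _ ≤ ∑ _i : Fin n, ENNReal.ofReal φ * ENNReal.ofReal (2 * ε) :=
        (measure_iUnion_fintype_le _ _).trans (sum_le_sum fun i _ => hcoord i)
    _ ≤ ENNReal.ofReal (2 * n * φ * ε) := by
        rw [sum_const, card_univ, Fintype.card_fin, nsmul_eq_mul, ← mul_assoc,
          ← ENNReal.ofReal_natCast, ← ENNReal.ofReal_mul n.cast_nonneg]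
        exact (ENNReal.ofReal_mul_ofReal_le _ _).trans_eq (by ring_nf)

/-- Winner-gap lemma: for `S ⊆ {0,1}^n` with at least two solutions and independent
`φ`-perturbed coefficients, the probability that the gap between the best and the
second-best solution is at most `ε` is at most `2nφε`. -/
theorem winner_gap {Ω : Type*} [MeasureSpace Ω]
    [IsProbabilityMeasure (ℙ : Measure Ω)] {n : ℕ}
    (S : Finset (Fin n → Bool)) (hS : 2 ≤ S.card)
    (c : Fin n → Ω → ℝ) (φ : ℝ) (hφ : 0 < φ)
    (hindep : ProbabilityTheory.iIndepFun c ℙ)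
    (hpdf : ∀ i, HasPDF (c i) ℙ)
    (hbound : ∀ i, ∀ᵐ x : ℝ, pdf (c i) ℙ volume x ≤ ENNReal.ofReal φ)
    (ε : ℝ) (hε : 0 < ε) :
    ℙ {ω | ∃ xs ∈ S, ∃ xss ∈ S, xs ≠ xss ∧
        (∀ y ∈ S, dotB (fun i => c i ω) xs ≤ dotB (fun i => c i ω) y) ∧
        (∀ y ∈ S, y ≠ xs → dotB (fun i => c i ω) xss ≤ dotB (fun i => c i ω) y) ∧
        dotB (fun i => c i ω) xss - dotB (fun i => c i ω) xs ≤ ε}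
      ≤ ENNReal.ofReal (2 * n * φ * ε) :=
  winner_gap_general S c φ hindep hpdf hbound ε
end
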